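/- Let G = ⟨r_0, ..., r_5⟩ be a Coxeter group isomorphic to [3,4,3,3,3]. Define t_0 = r_2, t_1 = r_1, t_2 = r_0, t_3 = r_3 r_2 r_1 r_2 r_3, t_4 = r_4, t_5 = r_5. Then the elements t_i are involutions satisfying the Coxeter relations of type [4,3,3,4,3]: (t_0 t_1)^4 = (t_1 t_2)^3 = (t_2 t_3)^3 = (t_3 t_4)^4 = (t_4 t_5)^3 = 1 and (t_i t_j)^2 = 1 for |i - j| ≥ 2. -/

import Mathlib

/-!
Put `w = r₃ r₂`. Then `t₃ = w r₁ w⁻¹` is a reflection, so every `tᵢ` is an involution, and the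
product of two commuting reflections squares to `1`. As `r₀` commutes with `w`,
`t₂ t₃ = w (r₀ r₁) w⁻¹`, while the braid relation of `r₃, r₄` gives
`t₃ t₄ = v (r₂ r₁ r₂ r₃) v⁻¹` with `v = r₃ r₄`. The relations of the `B₃` subdiagram `r₁ r₂ r₃`
show that `r₁` and `r₂` commute with `t₃`; hence so does `r₂ r₁ r₂`, and
`(r₂ r₁ r₂ r₃)² = (r₂ r₁ r₂) t₃` is a product of commuting involutions, which gives `(t₃ t₄)⁴ = 1`.
-/

/-- The Coxeter matrix of the string Coxeter group `[3,4,3,3,3]`. -/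
def M34333 : CoxeterMatrix (Fin 6) where
  M := !![1, 3, 2, 2, 2, 2;
          3, 1, 4, 2, 2, 2;
          2, 4, 1, 3, 2, 2;
          2, 2, 3, 1, 3, 2;
          2, 2, 2, 3, 1, 3;
          2, 2, 2, 2, 3, 1]
  off_diagonal i i' := by fin_cases i <;> fin_cases i' <;> decide

namespace CoxeterSystem

variable {B W : Type*} [Group W] {M : CoxeterMatrix B} (cs : CoxeterSystem M W)

local prefix:100 "s" => cs.simple

theorem wordProd_alternatingWord_eq_of_eq {i i' : B} {m : ℕ} (h : M i i' = m) :
    cs.wordProd (alternatingWord i i' m) = cs.wordProd (alternatingWord i' i m) := by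
  have := cs.wordProd_braidWord_eq i i'
  rwa [braidWord, braidWord, M.symmetric i' i, h] at this

theorem commute_simple_of_eq_two {i i' : B} (h : M i i' = 2) : Commute (s i) (s i') :=
  show s i * s i' = s i' * s i by
    simpa [wordProd, alternatingWord] using cs.wordProd_alternatingWord_eq_of_eq h

theorem simple_braid_of_eq_three {i i' : B} (h : M i i' = 3) :
    s i * s i' * s i = s i' * s i * s i' := by
  simpa [wordProd, alternatingWord, mul_assoc] using (cs.wordProd_alternatingWord_eq_of_eq h).symm

theorem simple_braid_of_eq_four {i i' : B} (h : M i i' = 4) :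
    s i * s i' * s i * s i' = s i' * s i * s i' * s i := by
  simpa [wordProd, alternatingWord, mul_assoc] using cs.wordProd_alternatingWord_eq_of_eq h

variable {cs} in
theorem IsReflection.orderOf_eq_two {t : W} (ht : cs.IsReflection t) : orderOf t = 2 :=
  orderOf_eq_prime ht.pow_two fun h => by simpa [h] using ht.odd_length

variable {cs} in
theorem IsReflection.mul_pow_two_of_commute {t t' : W} (ht : cs.IsReflection t)
    (ht' : cs.IsReflection t') (h : Commute t t') : (t * t') ^ 2 = 1 := by
  rw [h.mul_pow, ht.pow_two, ht'.pow_two, one_mul]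

end CoxeterSystem

structure IsB3Triple {G : Type*} [Group G] (a b c : G) : Prop where
  commute_left_right : Commute a c
  braid_left_middle : a * b * a * b = b * a * b * a
  braid_middle_right : b * c * b = c * b * c

namespace IsB3Triple

variable {G : Type*} [Group G] {a b c : G}

theorem commute_left (h : IsB3Triple a b c) : Commute a (c * b * a * b * c) :=
  calc a * (c * b * a * b * c) = (a * c) * b * a * b * c := by group
    _ = c * (a * b * a * b) * c := by rw [h.commute_left_right.eq]; group
    _ = c * b * a * b * (a * c) := by rw [h.braid_left_middle]; group
    _ = c * b * a * b * c * a := by rw [h.commute_left_right.eq]; group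

theorem commute_middle (h : IsB3Triple a b c) : Commute b (c * b * a * b * c) :=
  calc b * (c * b * a * b * c) = (b * c * b) * a * b * c := by group
    _ = c * b * (c * a) * b * c := by rw [h.braid_middle_right]; group
    _ = c * b * a * (c * b * c) := by rw [← h.commute_left_right.eq]; group
    _ = c * b * a * b * c * b := by rw [← h.braid_middle_right]; group

theorem mul_pow_four (h : IsB3Triple a b c) (ha : a ^ 2 = 1) (hb : b ^ 2 = 1) (hc : c ^ 2 = 1) :
    (b * a * b * c) ^ 4 = 1 := by
  have hb' : b⁻¹ = b := inv_eq_of_mul_eq_one_right (by rw [← sq, hb])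
  have hc' : c⁻¹ = c := inv_eq_of_mul_eq_one_right (by rw [← sq, hc])
  have hx : (b * a * b) ^ 2 = 1 := by
    rw [show b * a * b = b * a * b⁻¹ by rw [hb'], conj_pow, ha, mul_one, mul_inv_cancel]
  have hy : (c * b * a * b * c) ^ 2 = 1 := by
    rw [show c * b * a * b * c = (c * b) * a * (c * b)⁻¹ by rw [mul_inv_rev, hb', hc']; group,
      conj_pow, ha, mul_one, mul_inv_cancel]
  have hxy : Commute (b * a * b) (c * b * a * b * c) :=
    (h.commute_middle.mul_left h.commute_left).mul_left h.commute_middle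
  calc (b * a * b * c) ^ 4 = ((b * a * b) * (c * b * a * b * c)) ^ 2 := by
        rw [show 4 = 2 * 2 from rfl, pow_mul, sq (b * a * b * c)]; group
    _ = 1 := by rw [hxy.mul_pow, hx, hy, one_mul]

end IsB3Triple


namespace M34333

local notation "cs" => M34333.toCoxeterSystem
local prefix:100 "s" => CoxeterSystem.simple M34333.toCoxeterSystem
local notation "t₃" => s 3 * s 2 * s 1 * s 2 * s 3

theorem commute_simple {i j : Fin 6} (h : M34333 i j = 2 := by decide) : Commute (s i) (s j) :=
  (cs).commute_simple_of_eq_two h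

theorem isB3Triple : IsB3Triple (s 1) (s 2) (s 3) where
  commute_left_right := commute_simple
  braid_left_middle := (cs).simple_braid_of_eq_four (by decide)
  braid_middle_right := (cs).simple_braid_of_eq_three (by decide)

theorem t₃_eq_conj : t₃ = (s 3 * s 2) * s 1 * (s 3 * s 2)⁻¹ := by
  simp only [mul_inv_rev, (cs).inv_simple, mul_assoc]

theorem isReflection_t₃ : (cs).IsReflection t₃ := by
  rw [t₃_eq_conj]
  exact ((cs).isReflection_simple 1).conj (s 3 * s 2)

theorem simple_zero_mul_t₃_eq_conj :
    s 0 * t₃ = (s 3 * s 2) * (s 0 * s 1) * (s 3 * s 2)⁻¹ := by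
  have hw : Commute (s 0) (s 3 * s 2) := .mul_right commute_simple commute_simple
  calc s 0 * t₃
      = ((s 3 * s 2) * s 0 * (s 3 * s 2)⁻¹) * ((s 3 * s 2) * s 1 * (s 3 * s 2)⁻¹) := by
        rw [← t₃_eq_conj, ← hw.eq, mul_inv_cancel_right]
    _ = (s 3 * s 2) * (s 0 * s 1) * (s 3 * s 2)⁻¹ := by group

theorem t₃_mul_simple_four_eq_conj :
    t₃ * s 4 = (s 3 * s 4) * (s 2 * s 1 * s 2 * s 3) * (s 3 * s 4)⁻¹ := by
  have h4 : Commute (s 4) (s 2 * s 1 * s 2) :=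
    .mul_right (.mul_right commute_simple commute_simple) commute_simple
  symm
  calc (s 3 * s 4) * (s 2 * s 1 * s 2 * s 3) * (s 3 * s 4)⁻¹
      = s 3 * (s 4 * (s 2 * s 1 * s 2)) * s 3 * s 4 * s 3 := by
        rw [mul_inv_rev, (cs).inv_simple, (cs).inv_simple]; group
    _ = s 3 * (s 2 * s 1 * s 2) * (s 4 * s 3 * s 4) * s 3 := by rw [h4.eq]; group
    _ = s 3 * (s 2 * s 1 * s 2) * (s 3 * s 4 * s 3) * s 3 := by
        rw [(cs).simple_braid_of_eq_three (by decide : M34333 4 3 = 3)]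
    _ = t₃ * s 4 := by simp only [← mul_assoc, (cs).simple_mul_simple_cancel_right]

theorem commute_t₃_simple_five : Commute t₃ (s 5) :=
  have h3 : Commute (s 3) (s 5) := commute_simple
  have h2 : Commute (s 2) (s 5) := commute_simple
  (((h3.mul_left h2).mul_left commute_simple).mul_left h2).mul_left h3

def gens43343 : Fin 6 → M34333.Group :=
  ![s 2, s 1, s 0, t₃, s 4, s 5]

theorem isReflection_gens43343 (i : Fin 6) : (cs).IsReflection (gens43343 i) := by
  fin_cases i <;> first | exact (cs).isReflection_simple _ | exact isReflection_t₃

theorem commute_gens43343 {i j : Fin 6} (h : i.val + 2 ≤ j.val) :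
    Commute (gens43343 i) (gens43343 j) := by
  fin_cases i <;> fin_cases j <;> try exact absurd h (by decide)
  all_goals first
    | exact commute_simple
    | exact isB3Triple.commute_middle
    | exact isB3Triple.commute_left
    | exact commute_t₃_simple_five

theorem gens43343_two_mul_three_pow_three : (gens43343 2 * gens43343 3) ^ 3 = 1 := by
  have h01 : (s 0 * s 1) ^ 3 = 1 := (cs).simple_mul_simple_pow 0 1
  show (s 0 * t₃) ^ 3 = 1
  rw [simple_zero_mul_t₃_eq_conj, conj_pow, h01, mul_one, mul_inv_cancel]

theorem gens43343_three_mul_four_pow_four : (gens43343 3 * gens43343 4) ^ 4 = 1 := by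
  show (t₃ * s 4) ^ 4 = 1
  rw [t₃_mul_simple_four_eq_conj, conj_pow,
    isB3Triple.mul_pow_four ((cs).simple_sq 1) ((cs).simple_sq 2) ((cs).simple_sq 3), mul_one,
    mul_inv_cancel]

end M34333

/-- Let `G = ⟨r_0, …, r_5⟩ ≅ [3,4,3,3,3]` and set
`t_0 = r_2, t_1 = r_1, t_2 = r_0, t_3 = r_3 r_2 r_1 r_2 r_3, t_4 = r_4, t_5 = r_5`.
Then the `t_i` are involutions satisfying the Coxeter relations of the string type
`[4,3,3,4,3]`. -/
theorem stmt_15 : ∀ t : Fin 6 → M34333.Group,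
    (t 0 = M34333.simple 2 ∧ t 1 = M34333.simple 1 ∧ t 2 = M34333.simple 0 ∧
      t 3 = M34333.simple 3 * M34333.simple 2 * M34333.simple 1 * M34333.simple 2 *
        M34333.simple 3 ∧
      t 4 = M34333.simple 4 ∧ t 5 = M34333.simple 5) →
    (∀ i, orderOf (t i) = 2) ∧
      (t 0 * t 1) ^ 4 = 1 ∧ (t 1 * t 2) ^ 3 = 1 ∧ (t 2 * t 3) ^ 3 = 1 ∧
      (t 3 * t 4) ^ 4 = 1 ∧ (t 4 * t 5) ^ 3 = 1 ∧
      (∀ i j : Fin 6, (i : ℕ) + 2 ≤ (j : ℕ) ∨ (j : ℕ) + 2 ≤ (i : ℕ) →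
        (t i * t j) ^ 2 = 1) := by
  rintro t ⟨h0, h1, h2, h3, h4, h5⟩
  obtain rfl : t = M34333.gens43343 := by funext i; fin_cases i <;> assumption
  have hr := M34333.isReflection_gens43343
  refine ⟨fun i => (hr i).orderOf_eq_two, M34333.toCoxeterSystem.simple_mul_simple_pow 2 1,
    M34333.toCoxeterSystem.simple_mul_simple_pow 1 0, M34333.gens43343_two_mul_three_pow_three,
    M34333.gens43343_three_mul_four_pow_four, M34333.toCoxeterSystem.simple_mul_simple_pow 4 5,
    fun i j hij => ?_⟩
  rcases hij with h | h
  · exact (hr i).mul_pow_two_of_commute (hr j) (M34333.commute_gens43343 h)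
  · exact (hr i).mul_pow_two_of_commute (hr j) (M34333.commute_gens43343 h).symm
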